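/- arXiv:2002.04714 — 2 statements merged into one kernel-verified Lean document; each statement's English description precedes it below -/
import Mathlib

section
/- For all real x > 0, x^3 (sinh(2x)/2 - x) - 6 (x^2 (cosh(2x)+1)/2 + (cosh(2x)-1)/2 - x sinh(2x)) > 0. -/
/-!
With `t = 2x`, sixteen times the left-hand side is
`G t = (t³ + 48t) sinh t - (12t² + 48) cosh t - t⁴ - 12t² + 48`.
Differentiating `G` repeatedly gives a chain of functions, each vanishing at `0` and each the
derivative of the previous one up to a positive factor, ending in `t (8 sinh t + t cosh t) > 0`.
Walking the chain back up with "`f 0 = 0` and `f' > 0` on `(0, ∞)` imply `f > 0` there" gives `G > 0`.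
-/

open Real Set

theorem pos_of_deriv_pos {f : ℝ → ℝ} (hf : ContinuousOn f (Ici 0)) (h0 : f 0 = 0)
    (hf' : ∀ x, 0 < x → 0 < deriv f x) : ∀ x, 0 < x → 0 < f x := by
  intro x hx
  have hmono : StrictMonoOn f (Ici 0) :=
    strictMonoOn_of_deriv_pos (convex_Ici 0) hf fun y hy => hf' y (by simpa using hy)
  simpa [h0] using hmono self_mem_Ici hx.le hx

theorem poly_sinh_cosh_pos :
    ∀ t, 0 < t → 0 < (t ^ 3 + 48 * t) * sinh t - (12 * t ^ 2 + 48) * cosh t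
      - t ^ 4 - 12 * t ^ 2 + 48 := by
  have h6 : ∀ t, 0 < t → 0 < (t ^ 2 - 6) * sinh t + 6 * t * cosh t :=
    pos_of_deriv_pos (by fun_prop) (by simp) fun t ht => by
      simp (disch := fun_prop) [deriv_fun_mul, deriv_fun_add, deriv_fun_sub]
      nlinarith [sinh_pos_iff.2 ht, cosh_pos t]
  have h5 : ∀ t, 0 < t → 0 < (3 * t ^ 2 + 12) * sinh t + (t ^ 3 - 12 * t) * cosh t :=
    pos_of_deriv_pos (by fun_prop) (by simp) fun t ht => by
      simp (disch := fun_prop) [deriv_fun_mul, deriv_fun_add, deriv_fun_sub]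
      nlinarith [mul_pos ht (h6 t ht)]
  have h4 : ∀ t, 0 < t → 0 < (t ^ 3 - 12 * t) * sinh t + 24 * cosh t - 24 :=
    pos_of_deriv_pos (by fun_prop) (by simp) fun t ht => by
      simp (disch := fun_prop) [deriv_fun_mul, deriv_fun_add, deriv_fun_sub]
      linarith [h5 t ht]
  have h3 : ∀ t, 0 < t → 0 < (30 - 3 * t ^ 2) * sinh t + (t ^ 3 - 6 * t) * cosh t - 24 * t :=
    pos_of_deriv_pos (by fun_prop) (by simp) fun t ht => by
      simp (disch := fun_prop) [deriv_fun_mul, deriv_fun_add, deriv_fun_sub]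
      linarith [h4 t ht]
  have h2 : ∀ t, 0 < t →
      0 < (t ^ 3 + 6 * t) * sinh t + (24 - 6 * t ^ 2) * cosh t - 12 * t ^ 2 - 24 :=
    pos_of_deriv_pos (by fun_prop) (by simp) fun t ht => by
      simp (disch := fun_prop) [deriv_fun_mul, deriv_fun_add, deriv_fun_sub]
      linarith [h3 t ht]
  have h1 : ∀ t, 0 < t →
      0 < -9 * t ^ 2 * sinh t + (t ^ 3 + 24 * t) * cosh t - 4 * t ^ 3 - 24 * t :=
    pos_of_deriv_pos (by fun_prop) (by simp) fun t ht => by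
      simp (disch := fun_prop) [deriv_fun_mul, deriv_fun_add, deriv_fun_sub]
      linarith [h2 t ht]
  exact pos_of_deriv_pos (by fun_prop) (by simp) fun t ht => by
    simp (disch := fun_prop) [deriv_fun_mul, deriv_fun_add, deriv_fun_sub]
    linarith [h1 t ht]

theorem stmt_2 (x : ℝ) (hx : 0 < x) :
    x ^ 3 * (Real.sinh (2 * x) / 2 - x) -
      6 * (x ^ 2 * (Real.cosh (2 * x) + 1) / 2 + (Real.cosh (2 * x) - 1) / 2
        - x * Real.sinh (2 * x)) > 0 := by
  have h := poly_sinh_cosh_pos (2 * x) (by positivity)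
  linarith
end

section
/- For all real x > 0 and y with 0 < y < 1, ((xy coth(xy) - 1)(x coth(x) - 1)) / (coth(x) - y coth(xy)) < (y^2 / (4(1 - y^2))) (sinh(2x) - 2x). -/
/-!
With `f t = t * coth t - 1`, the left-hand side is `x / (f (x y)⁻¹ - f x⁻¹)`. The function
`f t⁻¹ - 3 / t²` is antitone on `(0, ∞)`: its derivative is nonpositive exactly when
`6 (t cosh t - sinh t)² ≤ t³ (sinh t cosh t - t)`, an inequality between polynomials in
`t, cosh t, sinh t` that follows by differentiating eight times. Hence
`f (x y)⁻¹ - f x⁻¹ ≥ 3 (1 - y²) / (x² y²)`, which bounds the left-hand side by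
`x³ y² / (3 (1 - y²))`, and this is `< y² / (4 (1 - y²)) (sinh 2x - 2x)` since
`sinh 2x > 2x + (2x)³ / 6`.
-/

noncomputable def coth (x : ℝ) : ℝ := Real.cosh x / Real.sinh x

open Real Polynomial Set

noncomputable def coshSinhPoly (p q r : ℝ[X]) (s : ℝ) : ℝ :=
  p.eval s * cosh s + q.eval s * sinh s + r.eval s

theorem hasDerivAt_coshSinhPoly (p q r : ℝ[X]) (s : ℝ) :
    HasDerivAt (coshSinhPoly p q r)
      (coshSinhPoly (derivative p + q) (derivative q + p) (derivative r) s) s :=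
  ((((p.hasDerivAt s).mul (hasDerivAt_cosh s)).add
    ((q.hasDerivAt s).mul (hasDerivAt_sinh s))).add (r.hasDerivAt s)).congr_deriv
    (by simp only [coshSinhPoly, eval_add]; ring)

theorem nonneg_of_hasDerivAt_nonneg {f f' : ℝ → ℝ} (hf : ∀ t, HasDerivAt f (f' t) t)
    (h0 : f 0 = 0) (hf' : ∀ t, 0 ≤ t → 0 ≤ f' t) {t : ℝ} (ht : 0 ≤ t) : 0 ≤ f t := by
  have hmono : MonotoneOn f (Ici 0) :=
    monotoneOn_of_hasDerivWithinAt_nonneg (convex_Ici 0)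
      (fun s _ => (hf s).continuousAt.continuousWithinAt)
      (fun s _ => (hf s).hasDerivWithinAt) (fun s hs => hf' s (interior_subset hs))
  simpa [h0] using hmono self_mem_Ici ht ht

theorem pos_of_hasDerivAt_pos {f f' : ℝ → ℝ} (hf : ∀ t, HasDerivAt f (f' t) t)
    (h0 : f 0 = 0) (hf' : ∀ t, 0 < t → 0 < f' t) {t : ℝ} (ht : 0 < t) : 0 < f t := by
  have hmono : StrictMonoOn f (Ici 0) :=
    strictMonoOn_of_hasDerivWithinAt_pos (convex_Ici 0)
      (fun s _ => (hf s).continuousAt.continuousWithinAt)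
      (fun s _ => (hf s).hasDerivWithinAt) (fun s hs => hf' s (by simpa using hs))
  simpa [h0] using hmono self_mem_Ici ht.le ht

theorem coshSinhPoly_nonneg_of_deriv {p q r : ℝ[X]} (h0 : coshSinhPoly p q r 0 = 0)
    (h' : ∀ s, 0 ≤ s →
      0 ≤ coshSinhPoly (derivative p + q) (derivative q + p) (derivative r) s)
    (s : ℝ) (hs : 0 ≤ s) : 0 ≤ coshSinhPoly p q r s :=
  nonneg_of_hasDerivAt_nonneg (hasDerivAt_coshSinhPoly p q r) h0 h' hs

theorem mul_cosh_add_le_mul_sinh_add {s : ℝ} (hs : 0 ≤ s) :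
    (12 * s ^ 2 + 48) * cosh s + 12 * s ^ 2 + s ^ 4 ≤ (s ^ 3 + 48 * s) * sinh s + 48 := by
  suffices h : ∀ s, 0 ≤ s →
      0 ≤ coshSinhPoly (-(12 * X ^ 2 + 48)) (X ^ 3 + 48 * X) (48 - 12 * X ^ 2 - X ^ 4) s by
    have := h s hs
    simp only [coshSinhPoly, eval_add, eval_sub, eval_neg, eval_mul, eval_pow, eval_X,
      eval_ofNat] at this
    linarith
  -- The form and its first seven derivatives vanish at 0; the eighth is
  -- 12 s² cosh s + (24 s + s³) sinh s.
  iterate 8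
    refine coshSinhPoly_nonneg_of_deriv (by norm_num [coshSinhPoly]) ?_
    simp only [derivative_add, derivative_sub, derivative_neg, derivative_mul, derivative_X_pow,
      derivative_X, derivative_ofNat, derivative_zero, map_natCast]
    ring_nf
  intro s hs
  have hsinh := sinh_nonneg_iff.2 hs
  simp only [coshSinhPoly, eval_add, eval_mul, eval_pow, eval_X, eval_ofNat, eval_zero]
  nlinarith [mul_nonneg (sq_nonneg s) (cosh_pos s).le, mul_nonneg hs hsinh,
    mul_nonneg (pow_nonneg hs 3) hsinh]

theorem six_mul_sq_le_pow_three_mul_sinh_mul_cosh_sub {t : ℝ} (ht : 0 ≤ t) :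
    6 * (t * cosh t - sinh t) ^ 2 ≤ t ^ 3 * (sinh t * cosh t - t) := by
  have h := mul_cosh_add_le_mul_sinh_add (by linarith : 0 ≤ 2 * t)
  rw [cosh_two_mul, sinh_two_mul] at h
  nlinarith [cosh_sq_sub_sinh_sq t]

theorem hasDerivAt_mul_cosh_sub_sinh (t : ℝ) :
    HasDerivAt (fun s => s * cosh s - sinh s) (t * sinh t) t :=
  (((hasDerivAt_id t).mul (hasDerivAt_cosh t)).sub (hasDerivAt_sinh t)).congr_deriv
    (by simp only [id_eq]; ring)

theorem sinh_lt_mul_cosh {t : ℝ} (ht : 0 < t) : sinh t < t * cosh t := by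
  have := pos_of_hasDerivAt_pos hasDerivAt_mul_cosh_sub_sinh (by simp)
    (fun s hs => mul_pos hs (sinh_pos_iff.2 hs)) ht
  linarith

theorem add_pow_three_div_six_lt_sinh {t : ℝ} (ht : 0 < t) : t + t ^ 3 / 6 < sinh t := by
  have h := sum_le_hasSum (Finset.range 3) (fun n _ => by positivity) (hasSum_sinh t)
  norm_num [Finset.sum_range_succ, Nat.factorial] at h
  have : 0 < t ^ 5 / 120 := by positivity
  linarith

theorem antitoneOn_sinh_div_sub_three_div_sq :
    AntitoneOn (fun t => sinh t / (t * cosh t - sinh t) - 3 / t ^ 2) (Ioi 0) := by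
  have hD : ∀ t ∈ Ioi (0 : ℝ), 0 < t * cosh t - sinh t := fun t ht =>
    sub_pos.2 (sinh_lt_mul_cosh ht)
  have hder : ∀ t ∈ Ioi (0 : ℝ),
      HasDerivAt (fun t => sinh t / (t * cosh t - sinh t) - 3 / t ^ 2)
        ((t - sinh t * cosh t) / (t * cosh t - sinh t) ^ 2 + 6 / t ^ 3) t := by
    intro t ht
    have ht0 : t ≠ 0 := ht.ne'
    have hne := (hD t ht).ne'
    refine ((hasDerivAt_sinh t).div (hasDerivAt_mul_cosh_sub_sinh t) hne).sub
      ((hasDerivAt_const t (3 : ℝ)).div (hasDerivAt_pow 2 t) (by positivity)) |>.congr_deriv ?_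
    rw [show cosh t * (t * cosh t - sinh t) - sinh t * (t * sinh t) = t - sinh t * cosh t by
      linear_combination t * cosh_sq_sub_sinh_sq t]
    field_simp
    ring
  refine antitoneOn_of_hasDerivWithinAt_nonpos (convex_Ioi 0)
    (fun t ht => (hder t ht).continuousAt.continuousWithinAt)
    (fun t ht => (hder t (interior_subset ht)).hasDerivWithinAt) ?_
  intro t ht
  rw [interior_Ioi] at ht
  have hD2 := pow_pos (hD t ht) 2
  have ht3 : (0 : ℝ) < t ^ 3 := pow_pos ht 3
  rw [div_add_div _ _ hD2.ne' ht3.ne']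
  exact div_nonpos_of_nonpos_of_nonneg
    (by nlinarith [six_mul_sq_le_pow_three_mul_sinh_mul_cosh_sub ht.le]) (by positivity)

theorem mul_coth_sub_one_eq {t : ℝ} (ht : 0 < t) :
    t * coth t - 1 = (t * cosh t - sinh t) / sinh t := by
  have hs := (sinh_pos_iff.2 ht).ne'
  rw [coth]
  field_simp

theorem mul_coth_sub_one_pos {t : ℝ} (ht : 0 < t) : 0 < t * coth t - 1 := by
  rw [mul_coth_sub_one_eq ht]
  exact div_pos (sub_pos.2 (sinh_lt_mul_cosh ht)) (sinh_pos_iff.2 ht)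

theorem three_div_sq_sub_le_inv_mul_coth_sub_one_sub {u v : ℝ} (hu : 0 < u) (huv : u ≤ v) :
    3 / u ^ 2 - 3 / v ^ 2 ≤ (u * coth u - 1)⁻¹ - (v * coth v - 1)⁻¹ := by
  have h := antitoneOn_sinh_div_sub_three_div_sq hu (lt_of_lt_of_le hu huv : 0 < v) huv
  simp only [mul_coth_sub_one_eq hu, mul_coth_sub_one_eq (hu.trans_le huv), inv_div] at h ⊢
  linarith

theorem stmt_3 (x y : ℝ) (hx : 0 < x) (hy0 : 0 < y) (hy1 : y < 1) :
    ((x * y * coth (x * y) - 1) * (x * coth x - 1)) / (coth x - y * coth (x * y)) <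
      (y ^ 2 / (4 * (1 - y ^ 2))) * (Real.sinh (2 * x) - 2 * x) := by
  have hu : 0 < x * y := mul_pos hx hy0
  have hy2 : 0 < 1 - y ^ 2 := by nlinarith
  set a := x * y * coth (x * y) - 1 with ha_def
  set b := x * coth x - 1 with hb_def
  have ha : 0 < a := mul_coth_sub_one_pos hu
  have hb : 0 < b := mul_coth_sub_one_pos hx
  have hgap : 3 * (1 - y ^ 2) / (x ^ 2 * y ^ 2) ≤ a⁻¹ - b⁻¹ := by
    have h := three_div_sq_sub_le_inv_mul_coth_sub_one_sub hu (by nlinarith : x * y ≤ x)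
    convert h using 1
    field_simp
  have hsinh : 2 * x + (2 * x) ^ 3 / 6 < sinh (2 * x) :=
    add_pow_three_div_six_lt_sinh (by positivity)
  calc a * b / (coth x - y * coth (x * y)) = x * (a⁻¹ - b⁻¹)⁻¹ := by
        rw [show coth x - y * coth (x * y) = (b - a) / x by rw [ha_def, hb_def]; field_simp; ring]
        field_simp
    _ ≤ x * (3 * (1 - y ^ 2) / (x ^ 2 * y ^ 2))⁻¹ :=
        mul_le_mul_of_nonneg_left (inv_anti₀ (by positivity) hgap) hx.le
    _ = y ^ 2 / (4 * (1 - y ^ 2)) * (4 * x ^ 3 / 3) := by field_simp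
    _ < y ^ 2 / (4 * (1 - y ^ 2)) * (sinh (2 * x) - 2 * x) :=
        mul_lt_mul_of_pos_left (by linarith) (by positivity)
end
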